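/- arXiv:1305.1922 — 9 statements merged into one kernel-verified Lean document; each statement's English description precedes it below -/
import Mathlib

section
/- Let f : ℝⁿ → ℝ be continuously differentiable and suppose f(y) ≤ f(x) + ⟨∇f(x), y − x⟩ + (L/2)‖y − x‖² for all x, y ∈ ℝⁿ and f is convex. Then the gradient of f is L-Lipschitz: ‖∇f(y) − ∇f(x)‖ ≤ L‖y − x‖ for all x, y. -/
/-!
Convexity bounds `f` below by its tangent planes. Evaluating that lower bound at
`y - L⁻¹ • (∇f y - ∇f x)` and the quadratic upper bound around `y` at the same point gives
`f x + ⟪∇f x, y - x⟫ + ‖∇f y - ∇f x‖² / (2L) ≤ f y`. Adding this to the same inequality with `x`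
and `y` swapped yields co-coercivity, `‖∇f y - ∇f x‖² / L ≤ ⟪∇f y - ∇f x, y - x⟫`, and
Cauchy–Schwarz turns it into the Lipschitz bound.
-/
open Set RealInnerProductSpace

section

variable {E : Type*} [NormedAddCommGroup E] [NormedSpace ℝ E] {f : E → ℝ} {f' : E →L[ℝ] ℝ} {x : E}

theorem ConvexOn.add_fderiv_le (hconv : ConvexOn ℝ univ f) (hf : HasFDerivAt f f' x) (y : E) :
    f x + f' (y - x) ≤ f y := by
  have hderiv : HasDerivAt (f ∘ AffineMap.lineMap (k := ℝ) x y) (f' (y - x)) 0 :=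
    hf.comp_hasDerivAt_of_eq 0 AffineMap.hasDerivAt_lineMap (AffineMap.lineMap_apply_zero x y).symm
  have := (hconv.comp_affineMap (AffineMap.lineMap x y)).le_slope_of_hasDerivAt (mem_univ 0)
    (mem_univ 1) one_pos hderiv
  simp only [slope_def_field, Function.comp_apply, AffineMap.lineMap_apply_one,
    AffineMap.lineMap_apply_zero, sub_zero, div_one] at this
  linarith

end

section

variable {E : Type*} [NormedAddCommGroup E] [InnerProductSpace ℝ E] [CompleteSpace E]
  {f : E → ℝ} {g : E → E} {L : ℝ}

theorem ConvexOn.add_inner_le_of_hasGradientAt (hconv : ConvexOn ℝ univ f) {x : E}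
    (hg : HasGradientAt f (g x) x) (y : E) : f x + ⟪g x, y - x⟫ ≤ f y := by
  simpa using hconv.add_fderiv_le hg.hasFDerivAt y

theorem ConvexOn.add_inner_add_sq_norm_div_le (hconv : ConvexOn ℝ univ f) {x : E}
    (hg : HasGradientAt f (g x) x) (hL : 0 < L)
    (henv : ∀ x y, f y ≤ f x + ⟪g x, y - x⟫ + L / 2 * ‖y - x‖ ^ 2) (y : E) :
    f x + ⟪g x, y - x⟫ + ‖g y - g x‖ ^ 2 / (2 * L) ≤ f y := by
  set d := g y - g x
  set u := y - L⁻¹ • d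
  have below := hconv.add_inner_le_of_hasGradientAt hg u
  have above := henv y u
  have hux : u - x = (y - x) - L⁻¹ • d := by simp only [u]; abel
  have huy : u - y = -(L⁻¹ • d) := by simp only [u]; abel
  rw [hux, inner_sub_right, real_inner_smul_right] at below
  rw [huy, inner_neg_right, real_inner_smul_right, norm_neg, norm_smul,
    Real.norm_of_nonneg (inv_nonneg.2 hL.le)] at above
  have hd : ⟪g y, d⟫ - ⟪g x, d⟫ = ‖d‖ ^ 2 := by
    rw [← inner_sub_left, real_inner_self_eq_norm_sq]
  field_simp at below above ⊢
  linarith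

theorem ConvexOn.sq_norm_sub_div_le_inner_sub (hconv : ConvexOn ℝ univ f)
    (hg : ∀ x, HasGradientAt f (g x) x) (hL : 0 < L)
    (henv : ∀ x y, f y ≤ f x + ⟪g x, y - x⟫ + L / 2 * ‖y - x‖ ^ 2) (x y : E) :
    ‖g y - g x‖ ^ 2 / L ≤ ⟪g y - g x, y - x⟫ := by
  have hxy := hconv.add_inner_add_sq_norm_div_le (hg x) hL henv y
  have hyx := hconv.add_inner_add_sq_norm_div_le (hg y) hL henv x
  rw [norm_sub_rev, ← neg_sub y x, inner_neg_right] at hyx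
  rw [inner_sub_left]
  have : ‖g y - g x‖ ^ 2 / L = ‖g y - g x‖ ^ 2 / (2 * L) + ‖g y - g x‖ ^ 2 / (2 * L) := by ring
  linarith

end

theorem stmt_1_general {n : ℕ} (f : EuclideanSpace ℝ (Fin n) → ℝ)
    (g : EuclideanSpace ℝ (Fin n) → EuclideanSpace ℝ (Fin n)) (L : ℝ)
    (hg : ∀ x, HasGradientAt f (g x) x) (hL : 0 < L)
    (hconv : ConvexOn ℝ Set.univ f)
    (henv : ∀ x y, f y ≤ f x + (inner ℝ (g x) (y - x) : ℝ) + L / 2 * ‖y - x‖ ^ 2) :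
    ∀ x y, ‖g y - g x‖ ≤ L * ‖y - x‖ := by
  intro x y
  have h := (hconv.sq_norm_sub_div_le_inner_sub hg hL henv x y).trans (real_inner_le_norm _ _)
  rw [div_le_iff₀ hL, sq, mul_assoc, mul_comm _ L] at h
  rcases (norm_nonneg (g y - g x)).eq_or_lt with h0 | hpos
  · rw [← h0]
    positivity
  · exact le_of_mul_le_mul_left h hpos

/-- If `f : ℝⁿ → ℝ` is convex, continuously differentiable with gradient `g`, and satisfies
the upper-envelope bound `f y ≤ f x + ⟨∇f x, y - x⟩ + (L/2)‖y - x‖²`, then the gradient is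
`L`-Lipschitz. -/
theorem stmt_1 {n : ℕ} (f : EuclideanSpace ℝ (Fin n) → ℝ)
    (g : EuclideanSpace ℝ (Fin n) → EuclideanSpace ℝ (Fin n)) (L : ℝ)
    (hf : ContDiff ℝ 1 f) (hg : ∀ x, HasGradientAt f (g x) x) (hL : 0 < L)
    (hconv : ConvexOn ℝ Set.univ f)
    (henv : ∀ x y, f y ≤ f x + (inner ℝ (g x) (y - x) : ℝ) + L / 2 * ‖y - x‖ ^ 2) :
    ∀ x y, ‖g y - g x‖ ≤ L * ‖y - x‖ :=
  stmt_1_general f g L hg hL hconv henv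
end

section
/- Let L > σ > 0 with L ≥ 4σ, and let q = L/(L−σ) − √((L/(L−σ))² − 1). Then 1 − √(2σ/L) ≤ q ≤ 1 − (1/2)√(σ/L). -/
set_option maxHeartbeats 1000000 in
/-- For `L ≥ 4σ > 0` and `q = L/(L-σ) - √((L/(L-σ))² - 1)`,
we have `1 - √(2σ/L) ≤ q ≤ 1 - (1/2)√(σ/L)`. -/
theorem stmt_11 (L σ : ℝ) (hσ : 0 < σ) (hL : 4 * σ ≤ L)
    (q : ℝ) (hq : q = L / (L - σ) - Real.sqrt ((L / (L - σ)) ^ 2 - 1)) :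
    1 - Real.sqrt (2 * σ / L) ≤ q ∧ q ≤ 1 - (1 / 2) * Real.sqrt (σ / L) := by
  have hL0 : 0 < L := by linarith
  have hden : 0 < L - σ := by linarith
  set a : ℝ := L / (L - σ) with ha
  have ha1 : 1 ≤ a := by
    rw [ha, le_div_iff₀ hden]; linarith
  have haval : a * (L - σ) = L := by
    rw [ha]; field_simp
  set t : ℝ := Real.sqrt (2 * σ / L) with htdef
  set u : ℝ := Real.sqrt (σ / L) with hudef
  have ht0 : 0 ≤ t := Real.sqrt_nonneg _
  have hu0 : 0 ≤ u := Real.sqrt_nonneg _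
  have ht2 : t ^ 2 = 2 * σ / L := Real.sq_sqrt (by positivity)
  have hu2 : u ^ 2 = σ / L := Real.sq_sqrt (by positivity)
  have ht2' : t ^ 2 * L = 2 * σ := by rw [ht2]; field_simp
  have hu2' : u ^ 2 * L = σ := by rw [hu2]; field_simp
  constructor
  · -- lower bound: sqrt(a²-1) ≤ a - 1 + t
    have hσLt : σ ≤ L * t := by
      have h1 : σ / L ≤ t := by
        rw [htdef]
        rw [show (σ / L) = Real.sqrt ((σ/L)^2) by rw [Real.sqrt_sq (by positivity)]]
        apply Real.sqrt_le_sqrt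
        have : σ / L ≤ 1 / 4 := by rw [div_le_div_iff₀ hL0 (by norm_num)]; linarith
        nlinarith [mul_nonneg (div_nonneg hσ.le hL0.le) (show (0:ℝ) ≤ 2 - σ/L by linarith)]
      calc σ = L * (σ / L) := by field_simp
        _ ≤ L * t := by nlinarith
    have key : a ^ 2 - 1 ≤ (a - 1 + t) ^ 2 := by
      have expand : (a - 1 + t) ^ 2 - (a ^ 2 - 1) = t^2 + 2*(a-1)*t - 2*(a-1) := by ring
      have h2 : 2 * (a - 1) ≤ t ^ 2 + 2 * (a - 1) * t := by
        have ha1' : (a - 1) * (L - σ) = σ := by nlinarith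
        -- multiply by L(L-σ): 2σL ≤ 2σ(L-σ) + 2σ t L ⟺ 2σ² ≤ 2σLt ⟸ σ ≤ Lt
        have : 2 * (a-1) * (L * (L - σ)) ≤ (t^2 + 2*(a-1)*t) * (L * (L - σ)) := by
          nlinarith [mul_pos hL0 hden, mul_nonneg ht0 hden.le]
        have hpos : 0 < L * (L - σ) := mul_pos hL0 hden
        exact le_of_mul_le_mul_right this hpos
      linarith
    have : Real.sqrt (a ^ 2 - 1) ≤ a - 1 + t := by
      calc Real.sqrt (a ^ 2 - 1) ≤ Real.sqrt ((a - 1 + t) ^ 2) := Real.sqrt_le_sqrt key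
        _ = a - 1 + t := Real.sqrt_sq (by linarith)
    rw [hq]; linarith
  · -- upper bound: a - 1 + u/2 ≤ sqrt(a²-1)
    have hu_half : u ≤ 1 / 2 := by
      rw [hudef, show (1:ℝ)/2 = Real.sqrt (1/4) by
        rw [show (1:ℝ)/4 = (1/2)^2 by norm_num, Real.sqrt_sq (by norm_num)]]
      apply Real.sqrt_le_sqrt
      rw [div_le_div_iff₀ hL0 (by norm_num)]; linarith
    have key : (a - 1 + (1/2) * u) ^ 2 ≤ a ^ 2 - 1 := by
      have ha1' : (a - 1) * (L - σ) = σ := by nlinarith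
      -- need (a-1)u + u²/4 ≤ 2(a-1); multiply by L(L-σ):
      -- σ u L + u² L (L-σ)/4 ≤ 2 σ L ⟺ σ u L + σ(L-σ)/4 ≤ 2σL
      have hLu : L * u ≤ L / 2 := by nlinarith
      have h2 : ((a-1)*u + u^2/4) * (L * (L - σ)) ≤ (2 * (a-1)) * (L * (L - σ)) := by
        have e1 : ((a-1)*u + u^2/4) * (L * (L - σ)) = σ * (L * u) + σ * (L - σ) / 4 := by
          linear_combination (u * L) * ha1' + ((L - σ)/4) * hu2'
        have e2 : (2 * (a-1)) * (L * (L - σ)) = 2 * σ * L := by linear_combination (2 * L) * ha1'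
        rw [e1, e2]
        have h4 := mul_le_mul_of_nonneg_left hLu hσ.le
        nlinarith [mul_pos hσ hσ]
      have hpos : 0 < L * (L - σ) := mul_pos hL0 hden
      have h3 : (a-1)*u + u^2/4 ≤ 2 * (a-1) := le_of_mul_le_mul_right h2 hpos
      nlinarith
    have hx0 : 0 ≤ a - 1 + (1/2) * u := by linarith
    have : a - 1 + (1/2) * u ≤ Real.sqrt (a ^ 2 - 1) := by
      rw [show a - 1 + (1/2)*u = Real.sqrt ((a - 1 + (1/2)*u)^2) by rw [Real.sqrt_sq hx0]]
      exact Real.sqrt_le_sqrt key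
    rw [hq]; linarith
end

section
/- Let σ, L, n > 0 and define the hard function f(x) = ((L−σ)/4)[(1 − x(1))² + Σ_{i=1}^{n−1}(x(i) − x(i+1))² + (x(n) − q^{n+1})²] + (σ/2)Σ_{i=1}^n x(i)². Then f is σ-strongly convex with respect to the Euclidean norm, and each componentwise Lipschitz constant L_i of ∇f satisfies L_i ≤ L. -/
/-!
The function is quadratic: `f(x + s v)` is a polynomial of degree two in `s` whose leading
coefficient is `Q(v) = ((L-σ)/4)(v₀² + Σ (vᵢ - vᵢ₊₁)² + vₙ²) + (σ/2)‖v‖²`. Since the chain term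
is a sum of squares, `Q(v) ≥ (σ/2)‖v‖²`, which is `σ`-strong convexity. Along the line through
`x` in the direction `eᵢ`, the `i`-th partial derivative is the derivative of this parabola, so it
changes by exactly `2 Q(eᵢ) t`; and `Q(eᵢ) = (L-σ)/4 · 2 + σ/2 = L/2`, because every coordinate
occurs in exactly two of the squares of the chain.
-/

open Finset

section QuadraticPart

variable {E : Type*}

section Module

variable [AddCommGroup E] [Module ℝ E]

/-- `f (x + s • v)` is a quadratic polynomial in `s` with leading coefficient `Q v`
(its linear coefficient is then forced by the value at `s = 1`). -/
def HasQuadraticPart (f Q : E → ℝ) : Prop :=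
  ∀ (x v : E) (s : ℝ), f (x + s • v) = f x + s * (f (x + v) - f x - Q v) + s ^ 2 * Q v

namespace HasQuadraticPart

variable {f g Q R : E → ℝ}

theorem add (hf : HasQuadraticPart f Q) (hg : HasQuadraticPart g R) :
    HasQuadraticPart (fun x => f x + g x) (fun v => Q v + R v) := by
  intro x v s
  dsimp only
  rw [hf, hg]
  ring

theorem sub (hf : HasQuadraticPart f Q) (hg : HasQuadraticPart g R) :
    HasQuadraticPart (fun x => f x - g x) (fun v => Q v - R v) := by
  intro x v s
  dsimp only
  rw [hf, hg]
  ring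

theorem const_mul (hf : HasQuadraticPart f Q) (c : ℝ) :
    HasQuadraticPart (fun x => c * f x) (fun v => c * Q v) := by
  intro x v s
  dsimp only
  rw [hf]
  ring

theorem sum {ι : Type*} (S : Finset ι) {f Q : ι → E → ℝ}
    (hf : ∀ k ∈ S, HasQuadraticPart (f k) (Q k)) :
    HasQuadraticPart (fun x => ∑ k ∈ S, f k x) (fun v => ∑ k ∈ S, Q k v) := by
  intro x v s
  dsimp only
  rw [sum_congr rfl fun k hk => hf k hk x v s]
  simp only [sum_add_distrib, ← mul_sum, sum_sub_distrib]

theorem convexOn (hf : HasQuadraticPart f Q) (hQ : ∀ v, 0 ≤ Q v) :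
    ConvexOn ℝ Set.univ f := by
  refine ⟨convex_univ, fun x _ y _ a b ha hb hab => ?_⟩
  obtain rfl : b = 1 - a := by linarith
  have hxy : a • x + (1 - a) • y = y + a • (x - y) := by module
  rw [hxy, hf, add_sub_cancel, smul_eq_mul, smul_eq_mul]
  nlinarith [mul_nonneg (mul_nonneg ha hb) (hQ (x - y))]

end HasQuadraticPart

theorem hasQuadraticPart_sq_sub (ℓ : E →ₗ[ℝ] ℝ) (a : ℝ) :
    HasQuadraticPart (fun x => (ℓ x - a) ^ 2) (fun v => ℓ v ^ 2) := by
  intro x v s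
  simp only [map_add, map_smul, smul_eq_mul]
  ring

end Module

theorem hasQuadraticPart_norm_sq [NormedAddCommGroup E] [InnerProductSpace ℝ E] :
    HasQuadraticPart (fun x : E => ‖x‖ ^ 2) (fun v => ‖v‖ ^ 2) := by
  intro x v s
  simp only [norm_add_sq_real, norm_smul, inner_smul_right, mul_pow, Real.norm_eq_abs, sq_abs]
  ring

theorem HasQuadraticPart.strongConvexOn [NormedAddCommGroup E] [InnerProductSpace ℝ E]
    {f Q : E → ℝ} {m : ℝ} (hf : HasQuadraticPart f Q) (hQ : ∀ v, m / 2 * ‖v‖ ^ 2 ≤ Q v) :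
    StrongConvexOn Set.univ m f := by
  rw [strongConvexOn_iff_convex]
  exact (hf.sub (hasQuadraticPart_norm_sq.const_mul (m / 2))).convexOn
    fun v => sub_nonneg.mpr (hQ v)

theorem HasQuadraticPart.fderiv_add_smul_apply_sub [NormedAddCommGroup E] [NormedSpace ℝ E]
    {f Q : E → ℝ} (hf : HasQuadraticPart f Q) (hdiff : Differentiable ℝ f) (x v : E) (t : ℝ) :
    fderiv ℝ f (x + t • v) v - fderiv ℝ f x v = 2 * Q v * t := by
  set b := f (x + v) - f x - Q v
  have hline : ∀ s : ℝ, fderiv ℝ f (x + s • v) v = b + 2 * Q v * s := by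
    intro s
    have hchain : HasDerivAt (fun r : ℝ => f (x + r • v)) (fderiv ℝ f (x + s • v) v) s := by
      refine (hdiff _).hasFDerivAt.comp_hasDerivAt s ?_
      simpa using ((hasDerivAt_id s).smul_const v).const_add x
    have hpoly : HasDerivAt (fun r : ℝ => f x + r * b + r ^ 2 * Q v) (b + 2 * Q v * s) s := by
      refine ((((hasDerivAt_id' s).mul_const b).const_add (f x)).add
        ((hasDerivAt_pow 2 s).mul_const (Q v))).congr_deriv ?_
      ring
    rw [show (fun r : ℝ => f (x + r • v)) = _ from funext (hf x v)] at hchain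
    exact hchain.unique hpoly
  rw [hline t, show fderiv ℝ f x v = b by simpa using hline 0]
  ring

end QuadraticPart

section Chain

variable {n : ℕ}

def chainEnergy (a c : ℝ) (x : EuclideanSpace ℝ (Fin (n + 1))) : ℝ :=
  (x 0 - a) ^ 2 + ∑ j : Fin n, (x j.castSucc - x j.succ) ^ 2 + (x (Fin.last n) - c) ^ 2

theorem chainEnergy_nonneg (a c : ℝ) (x : EuclideanSpace ℝ (Fin (n + 1))) :
    0 ≤ chainEnergy a c x := by
  unfold chainEnergy
  positivity

theorem differentiable_chainEnergy (a c : ℝ) : Differentiable ℝ (chainEnergy (n := n) a c) := by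
  unfold chainEnergy
  fun_prop

theorem hasQuadraticPart_chainEnergy (a c : ℝ) :
    HasQuadraticPart (chainEnergy (n := n) a c) (chainEnergy 0 0) := by
  let proj (k : Fin (n + 1)) : EuclideanSpace ℝ (Fin (n + 1)) →ₗ[ℝ] ℝ :=
    (EuclideanSpace.proj k).toLinearMap
  have h := ((hasQuadraticPart_sq_sub (proj 0) a).add
    (HasQuadraticPart.sum univ fun (j : Fin n) _ =>
      hasQuadraticPart_sq_sub (proj j.castSucc - proj j.succ) 0)).add
    (hasQuadraticPart_sq_sub (proj (Fin.last n)) c)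
  convert h using 1 <;> funext x <;> simp [chainEnergy, proj]

theorem chainEnergy_zero_zero_single (i : Fin (n + 1)) :
    chainEnergy 0 0 (EuclideanSpace.single i (1 : ℝ)) = 2 := by
  set e := EuclideanSpace.single i (1 : ℝ)
  have hsq : ∀ k, e k ^ 2 = e k := fun k => by
    by_cases h : k = i <;> simp [e, h]
  have hdisjoint : ∀ j : Fin n, e j.castSucc * e j.succ = 0 := fun j => by
    by_cases h : j.castSucc = i
    · simp [e, ← h, Fin.castSucc_lt_succ.ne']
    · simp [e, h]
  have htotal : ∑ k, e k = 1 := by simp [e]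
  have hcast : ∑ j : Fin n, e j.castSucc = 1 - e (Fin.last n) := by
    rw [← htotal, Fin.sum_univ_castSucc]
    ring
  have hsucc : ∑ j : Fin n, e j.succ = 1 - e 0 := by
    rw [← htotal, Fin.sum_univ_succ]
    ring
  have hterm : ∀ j : Fin n, (e j.castSucc - e j.succ) ^ 2 = e j.castSucc + e j.succ := fun j => by
    linear_combination hsq j.castSucc + hsq j.succ - 2 * hdisjoint j
  simp only [chainEnergy, sub_zero, hsq, hterm, sum_add_distrib, hcast, hsucc]
  ring

end Chain

theorem stmt_12_general {n : ℕ} (σ L q : ℝ) (hσ : 0 < σ) (hσL : σ < L)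
    (f : EuclideanSpace ℝ (Fin (n + 1)) → ℝ)
    (hf : ∀ x, f x = (L - σ) / 4 *
        ((1 - x 0) ^ 2 + (∑ i : Fin n, (x i.castSucc - x i.succ) ^ 2)
          + (x (Fin.last n) - q ^ (n + 2)) ^ 2)
      + σ / 2 * ∑ i, (x i) ^ 2) :
    StrongConvexOn Set.univ σ f ∧
    ∀ (i : Fin (n + 1)) (x : EuclideanSpace ℝ (Fin (n + 1))) (t : ℝ),
      |fderiv ℝ f (x + t • EuclideanSpace.single i (1 : ℝ)) (EuclideanSpace.single i 1)
        - fderiv ℝ f x (EuclideanSpace.single i 1)| ≤ L * |t| := by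
  have hf' : f = fun x => (L - σ) / 4 * chainEnergy 1 (q ^ (n + 2)) x + σ / 2 * ‖x‖ ^ 2 := by
    funext x
    rw [hf, chainEnergy, EuclideanSpace.real_norm_sq_eq]
    ring
  have hquad : HasQuadraticPart f fun v => (L - σ) / 4 * chainEnergy 0 0 v + σ / 2 * ‖v‖ ^ 2 :=
    hf' ▸ ((hasQuadraticPart_chainEnergy 1 _).const_mul _).add
      (hasQuadraticPart_norm_sq.const_mul _)
  refine ⟨hquad.strongConvexOn fun v => ?_, fun i x t => ?_⟩
  · nlinarith [chainEnergy_nonneg 0 0 v]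
  · have hdiff : Differentiable ℝ f := by
      rw [hf']
      exact ((differentiable_chainEnergy 1 _).const_mul _).add
        ((differentiable_id.norm_sq ℝ).const_mul _)
    rw [hquad.fderiv_add_smul_apply_sub hdiff, chainEnergy_zero_zero_single, PiLp.norm_single,
      norm_one, show 2 * ((L - σ) / 4 * 2 + σ / 2 * 1 ^ 2) * t = L * t by ring, abs_mul,
      abs_of_pos (hσ.trans hσL)]

/-- The hard instance
`f(x) = ((L-σ)/4)[(1 - x₀)² + Σᵢ(xᵢ - xᵢ₊₁)² + (x_last - q^{n+2})²] + (σ/2)Σᵢ xᵢ²`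
(on ℝ^{n+1}, 0-indexed coordinates) is `σ`-strongly convex for the Euclidean norm, and
every componentwise Lipschitz constant of its gradient is at most `L`. -/
theorem stmt_12 {n : ℕ} (σ L q : ℝ) (hσ : 0 < σ) (hσL : σ < L) (hq : q ∈ Set.Ioo (0 : ℝ) 1)
    (f : EuclideanSpace ℝ (Fin (n + 1)) → ℝ)
    (hf : ∀ x, f x = (L - σ) / 4 *
        ((1 - x 0) ^ 2 + (∑ i : Fin n, (x i.castSucc - x i.succ) ^ 2)
          + (x (Fin.last n) - q ^ (n + 2)) ^ 2)
      + σ / 2 * ∑ i, (x i) ^ 2) :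
    StrongConvexOn Set.univ σ f ∧
    ∀ (i : Fin (n + 1)) (x : EuclideanSpace ℝ (Fin (n + 1))) (t : ℝ),
      |fderiv ℝ f (x + t • EuclideanSpace.single i (1 : ℝ)) (EuclideanSpace.single i 1)
        - fderiv ℝ f x (EuclideanSpace.single i 1)| ≤ L * |t| :=
  stmt_12_general σ L q hσ hσL f hf
end

section
/- Let f : ℝⁿ → ℝ be σ-strongly convex with minimizer x* given by x*(i) = q^i for some q ∈ (0,1). If x ∈ ℝⁿ has x(i) = 0 for all i > j, then f(x) − f(x*) ≥ (σ/2) q^{2j} ‖x*‖² − (σ/2) q^{2n+2}/(1 − q²). -/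
lemma aux_geom_13 (r : ℝ) (hr0 : 0 < r) (hr1 : r < 1) (n j : ℕ) :
    r^j * (∑ i ∈ Finset.range n, r^(i+1)) ≤ (∑ i ∈ Finset.Ico j n, r^(i+1)) + r^(n+1)/(1-r) := by
  have hnn : ∀ k : ℕ, (0:ℝ) ≤ r^(k+1) := fun k => by positivity
  have h1r : (0:ℝ) < 1 - r := by linarith
  have h1 : r^j * (∑ i ∈ Finset.range n, r^(i+1)) = ∑ k ∈ Finset.Ico j (n+j), r^(k+1) := by
    rw [Finset.sum_Ico_eq_sum_range]
    simp only [add_tsub_cancel_right]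
    rw [Finset.mul_sum]
    exact Finset.sum_congr rfl fun i _ => by rw [← pow_add, Nat.add_assoc]
  have h2 : ∑ k ∈ Finset.Ico j (n+j), r^(k+1)
      ≤ ∑ k ∈ Finset.Ico j n, r^(k+1) + ∑ k ∈ Finset.Ico n (n+j), r^(k+1) := by
    rw [← Finset.sum_union (Finset.Ico_disjoint_Ico_consecutive j n (n+j))]
    apply Finset.sum_le_sum_of_subset_of_nonneg
    · intro k hk
      simp only [Finset.mem_Ico, Finset.mem_union] at *
      omega
    · intro k _ _; exact hnn k
  have h3 : ∑ k ∈ Finset.Ico n (n+j), r^(k+1) ≤ r^(n+1)/(1-r) := by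
    rw [Finset.sum_Ico_eq_sum_range]
    simp only [add_tsub_cancel_left]
    have heq : ∀ i ∈ Finset.range j, r^(n+i+1) = r^(n+1) * r^i := fun i _ => by
      rw [← pow_add]; congr 1; omega
    rw [Finset.sum_congr rfl heq, ← Finset.mul_sum]
    have hg : ∑ i ∈ Finset.range j, r^i = (1 - r^j)/(1-r) := by
      rw [geom_sum_eq (by linarith)]
      rw [div_eq_div_iff (by linarith) (by linarith)]
      ring
    rw [hg, div_eq_mul_inv, div_eq_mul_inv, ← mul_assoc]
    have hrj : (0:ℝ) ≤ r^j := by positivity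
    have hinv : (0:ℝ) ≤ (1-r)⁻¹ := by positivity
    nlinarith [hnn n, mul_nonneg (mul_nonneg (hnn n) hrj) hinv]
  linarith

lemma aux_sc_13 {n : ℕ} (σ : ℝ) (f : EuclideanSpace ℝ (Fin n) → ℝ)
    (xstar x : EuclideanSpace ℝ (Fin n))
    (hsc : StrongConvexOn Set.univ σ f) (hmin : ∀ y, f xstar ≤ f y) :
    σ / 2 * ‖x - xstar‖ ^ 2 ≤ f x - f xstar := by
  set C := ‖x - xstar‖ ^ 2 with hC
  have key : ∀ t : ℝ, t ∈ Set.Ioc (0:ℝ) 1 → σ / 2 * ((1 - t) * C) ≤ f x - f xstar := by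
    intro t ht
    have h2 := hsc.2 (Set.mem_univ x) (Set.mem_univ xstar) (le_of_lt ht.1)
      (by linarith [ht.2] : (0:ℝ) ≤ 1 - t) (by ring)
    have h3 := hmin (t • x + (1 - t) • xstar)
    have h4 : t * f xstar ≤ t * f x - t * (1 - t) * (σ / 2 * C) := by
      simp only [smul_eq_mul] at h2; rw [← hC] at h2
      nlinarith [h2, h3]
    have h5 : f xstar ≤ f x - (1 - t) * (σ / 2 * C) := by
      have := ht.1
      nlinarith
    linarith
  have hlim : Filter.Tendsto (fun t : ℝ => σ / 2 * ((1 - t) * C)) (nhdsWithin 0 (Set.Ioi 0))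
      (nhds (σ / 2 * ((1 - 0) * C))) := by
    apply Filter.Tendsto.mono_left _ nhdsWithin_le_nhds
    exact (by continuity : Continuous fun t : ℝ => σ / 2 * ((1 - t) * C)).tendsto 0
  have hcl := le_of_tendsto hlim (Filter.eventually_of_mem
    (Ioc_mem_nhdsGT_of_mem (Set.left_mem_Ico.mpr one_pos)) key)
  simpa using hcl

/-- If `f` is `σ`-strongly convex with minimizer `x*` given by `x*(i) = q^i`
(1-based; here coordinate `i : Fin n` holds `q^(i+1)`), and `x` vanishes on all 1-based
coordinates `> j`, then `f x - f x* ≥ (σ/2)q^{2j}‖x*‖² - (σ/2)q^{2n+2}/(1 - q²)`. -/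
theorem stmt_13 {n : ℕ} (σ q : ℝ) (hσ : 0 < σ) (hq : q ∈ Set.Ioo (0 : ℝ) 1)
    (f : EuclideanSpace ℝ (Fin n) → ℝ) (xstar : EuclideanSpace ℝ (Fin n))
    (hxstar : ∀ i : Fin n, xstar i = q ^ ((i : ℕ) + 1))
    (hsc : StrongConvexOn Set.univ σ f)
    (hmin : ∀ y, f xstar ≤ f y)
    (j : ℕ) (x : EuclideanSpace ℝ (Fin n))
    (hx : ∀ i : Fin n, j ≤ (i : ℕ) → x i = 0) :
    σ / 2 * q ^ (2 * j) * ‖xstar‖ ^ 2 - σ / 2 * q ^ (2 * n + 2) / (1 - q ^ 2)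
      ≤ f x - f xstar := by
  obtain ⟨hq0, hq1⟩ := hq
  have hr0 : (0:ℝ) < q^2 := by positivity
  have hr1 : q^2 < 1 := by nlinarith
  -- norm of xstar
  have hxs : ‖xstar‖^2 = ∑ i ∈ Finset.range n, (q^2)^(i+1) := by
    rw [EuclideanSpace.norm_eq, Real.sq_sqrt (by positivity)]
    rw [← Fin.sum_univ_eq_sum_range (fun i => (q^2)^(i+1))]
    exact Finset.sum_congr rfl fun i _ => by
      rw [hxstar i, Real.norm_eq_abs, sq_abs, ← pow_mul, ← pow_mul]; ring_nf
  -- lower bound on ‖x - xstar‖²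
  have hT : ∑ k ∈ Finset.Ico j n, (q^2)^(k+1) ≤ ‖x - xstar‖^2 := by
    rw [EuclideanSpace.norm_eq, Real.sq_sqrt (by positivity)]
    have h1 : ∑ k ∈ Finset.Ico j n, (q^2)^(k+1)
        = ∑ i : Fin n, (if j ≤ (i:ℕ) then (q^2)^((i:ℕ)+1) else 0) := by
      rw [Fin.sum_univ_eq_sum_range (fun i => if j ≤ i then (q^2)^(i+1) else 0),
        ← Finset.sum_filter]
      apply Finset.sum_congr _ (fun _ _ => rfl)
      ext k
      simp [Finset.mem_Ico]
      omega
    rw [h1]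
    apply Finset.sum_le_sum
    intro i _
    have hsub : (x - xstar) i = x i - xstar i := rfl
    split_ifs with h
    · rw [hsub, hx i h, zero_sub, norm_neg, hxstar i, Real.norm_eq_abs, sq_abs,
        ← pow_mul, ← pow_mul]
      ring_nf
      exact le_refl _
    · positivity
  have hA := aux_sc_13 σ f xstar x hsc hmin
  have hB := aux_geom_13 (q^2) hr0 hr1 n j
  rw [← hxs] at hB
  have hpj : q ^ (2 * j) = (q^2)^j := pow_mul q 2 j
  have hpn : q ^ (2 * n + 2) = (q^2)^(n+1) := by rw [← pow_mul]; congr 1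
  rw [hpj, hpn]
  have hσ2 : (0:ℝ) ≤ σ / 2 := by linarith
  set T := ∑ k ∈ Finset.Ico j n, (q^2)^(k+1) with hTdef
  set P := (q^2)^(n+1) / (1 - q^2) with hPdef
  have e1 : σ / 2 * (T + P) = σ/2*T + σ/2*P := by ring
  have e2 : σ / 2 * (q ^ 2) ^ j * ‖xstar‖ ^ 2 - σ / 2 * (q ^ 2) ^ (n + 1) / (1 - q ^ 2)
      = σ/2*((q^2)^j * ‖xstar‖^2) - σ/2*P := by rw [hPdef]; ring
  linarith [mul_le_mul_of_nonneg_left hB hσ2, mul_le_mul_of_nonneg_left hT hσ2, hA, e1, e2]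
end

section
/- Define sequences by a₀ = 1/(2n), b₀ = 2, and suppose for all k ≥ 0: b_{k+1} ≥ b_k + (1/(2c²)) a_{k+1} and a_{k+1} ≥ a_k + (1/(4n)) b_k, where c = √(Sn/(2σ)) with 2Sn ≥ σ > 0 (so that 1/(2c²) = σ/S and the step ratio is r = (1/2)√(σ/(2Sn))). Then for all k ≥ 0: a_k ≥ √(S/(2nσ))·[(1+r)^{k+1} − (1−r)^{k+1}] and b_k ≥ (1+r)^{k+1} + (1−r)^{k+1}, where r = (1/2)√(σ/(2Sn)). -/
/-- Exponential growth of the ACDM coefficients: if `a₀ = 1/(2n)`, `b₀ = 2`,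
`b_{k+1} ≥ b_k + (σ/(2S))a_{k+1}` and `a_{k+1} ≥ a_k + (1/(4n))b_k`, then with
`r = (1/2)√(σ/(2Sn))` one has
`a_k ≥ √(S/(2nσ))[(1+r)^{k+1} - (1-r)^{k+1}]` and `b_k ≥ (1+r)^{k+1} + (1-r)^{k+1}`. -/
theorem stmt_14 (n : ℕ) (hn : 1 ≤ n) (S σ : ℝ) (hS : 0 < S) (hσ : 0 < σ)
    (h2Sn : σ ≤ 2 * S * n) (a b : ℕ → ℝ)
    (hapos : ∀ k, 0 < a k) (hbpos : ∀ k, 0 < b k)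
    (ha0 : a 0 = 1 / (2 * n)) (hb0 : b 0 = 2)
    (hb : ∀ k, b k + σ / (2 * S) * a (k + 1) ≤ b (k + 1))
    (ha : ∀ k, a k + 1 / (4 * n) * b k ≤ a (k + 1)) :
    ∀ k : ℕ,
      Real.sqrt (S / (2 * n * σ)) *
          ((1 + (1 / 2) * Real.sqrt (σ / (2 * S * n))) ^ (k + 1)
            - (1 - (1 / 2) * Real.sqrt (σ / (2 * S * n))) ^ (k + 1)) ≤ a k ∧
      (1 + (1 / 2) * Real.sqrt (σ / (2 * S * n))) ^ (k + 1)
          + (1 - (1 / 2) * Real.sqrt (σ / (2 * S * n))) ^ (k + 1) ≤ b k := by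
  have hn' : (0:ℝ) < (n:ℝ) := by exact_mod_cast hn
  set r : ℝ := (1 / 2) * Real.sqrt (σ / (2 * S * n)) with hrdef
  set q : ℝ := Real.sqrt (S / (2 * n * σ)) with hqdef
  have hq0 : 0 ≤ q := Real.sqrt_nonneg _
  have hr0 : 0 ≤ r := by
    have := Real.sqrt_nonneg (σ / (2 * S * n)); rw [hrdef]; linarith
  have hr1 : r ≤ 1 / 2 := by
    have h1 : σ / (2 * S * n) ≤ 1 := by
      rw [div_le_one (by positivity)]; exact h2Sn
    have h2 : Real.sqrt (σ / (2 * S * n)) ≤ 1 := by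
      calc Real.sqrt (σ / (2 * S * n)) ≤ Real.sqrt 1 := Real.sqrt_le_sqrt h1
        _ = 1 := Real.sqrt_one
    rw [hrdef]; linarith
  have key1 : q * r = 1 / (4 * n) := by
    rw [hrdef, hqdef]
    rw [show Real.sqrt (S / (2 * ↑n * σ)) * (1 / 2 * Real.sqrt (σ / (2 * S * ↑n)))
      = 1 / 2 * (Real.sqrt (S / (2 * ↑n * σ)) * Real.sqrt (σ / (2 * S * ↑n))) by ring]
    rw [← Real.sqrt_mul (by positivity)]
    rw [show S / (2 * ↑n * σ) * (σ / (2 * S * ↑n)) = (1 / (2 * n)) ^ 2 by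
      field_simp]
    rw [Real.sqrt_sq (by positivity)]
    field_simp
    ring
  have key2 : σ / (2 * S) * q = r := by
    rw [hrdef, hqdef]
    rw [show σ / (2 * S) = Real.sqrt ((σ / (2 * S)) ^ 2) by
      rw [Real.sqrt_sq (by positivity)]]
    rw [← Real.sqrt_mul (by positivity)]
    rw [show (1:ℝ) / 2 = Real.sqrt ((1 / 2) ^ 2) by
      rw [Real.sqrt_sq (by norm_num)]]
    rw [← Real.sqrt_mul (by positivity)]
    congr 1
    field_simp
  intro k
  induction k with
  | zero =>
    constructor
    · rw [ha0, show q * ((1 + r) ^ (0 + 1) - (1 - r) ^ (0 + 1)) = 2 * (q * r) by ring,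
        key1]
      apply le_of_eq
      field_simp
      ring
    · rw [hb0]; rw [show (1 + r) ^ (0 + 1) + (1 - r) ^ (0 + 1) = 2 by ring]
  | succ k ih =>
    obtain ⟨iha, ihb⟩ := ih
    have hM : 0 ≤ (1 - r) ^ (k + 1) := pow_nonneg (by linarith) _
    have hP : 0 ≤ (1 + r) ^ (k + 1) := pow_nonneg (by linarith) _
    have hstepa : q * ((1 + r) ^ (k + 1 + 1) - (1 - r) ^ (k + 1 + 1)) ≤ a (k + 1) := by
      have h1 := ha k
      have hmul : 1 / (4 * (n:ℝ)) * ((1 + r) ^ (k + 1) + (1 - r) ^ (k + 1))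
          ≤ 1 / (4 * (n:ℝ)) * b k :=
        mul_le_mul_of_nonneg_left ihb (by positivity)
      have hid : q * ((1 + r) ^ (k + 1 + 1) - (1 - r) ^ (k + 1 + 1))
          = q * ((1 + r) ^ (k + 1) - (1 - r) ^ (k + 1))
            + (q * r) * ((1 + r) ^ (k + 1) + (1 - r) ^ (k + 1)) := by ring
      rw [hid, key1]
      linarith
    refine ⟨hstepa, ?_⟩
    have h2 : r * ((1 + r) ^ (k + 1 + 1) - (1 - r) ^ (k + 1 + 1))
        ≤ σ / (2 * S) * a (k + 1) := by
      have := mul_le_mul_of_nonneg_left hstepa (le_of_lt (show (0:ℝ) < σ / (2 * S) by positivity))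
      calc r * ((1 + r) ^ (k + 1 + 1) - (1 - r) ^ (k + 1 + 1))
          = σ / (2 * S) * (q * ((1 + r) ^ (k + 1 + 1) - (1 - r) ^ (k + 1 + 1))) := by
            rw [← key2]; ring
        _ ≤ σ / (2 * S) * a (k + 1) := this
    have hid2 : (1 + r) ^ (k + 1 + 1) + (1 - r) ^ (k + 1 + 1)
        = (1 + r) ^ (k + 1) + (1 - r) ^ (k + 1)
          + r * ((1 + r) ^ (k + 1 + 1) - (1 - r) ^ (k + 1 + 1))
          - r ^ 2 * ((1 + r) ^ (k + 1) + (1 - r) ^ (k + 1)) := by ring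
    have hr2 : 0 ≤ r ^ 2 * ((1 + r) ^ (k + 1) + (1 - r) ^ (k + 1)) := by positivity
    have := hb k
    linarith
end

section
/- Fix n ≥ 1 and constants S, σ > 0 with 2Sn ≥ σ. Define γ₋₁ = 1/(4n) and for k ≥ 0 let γ_{k+1} be the positive root of γ² − (1/(2n) − γ_k²σ/S)γ − γ_k² = 0. Then the sequence (γ_k) is monotonically increasing and bounded above by √(S/(2nσ)); moreover S/(2nσ) − γ_{k+1}² = (1 − γ_{k+1}σ/S)(S/(2nσ) − γ_k²) for all k. -/
set_option maxHeartbeats 800000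


/-- The ACDM coefficient recursion: starting from `γ₋₁ = 1/(4n)` (indexed here as `γ 0`)
and taking `γ_{k+1}` to be the positive root of `γ² - (1/(2n) - γ_k²σ/S)γ - γ_k² = 0`,
the sequence is monotonically increasing, bounded above by `√(S/(2nσ))`, and satisfies
`S/(2nσ) - γ_{k+1}² = (1 - γ_{k+1}σ/S)(S/(2nσ) - γ_k²)`. -/
theorem stmt_15 (n : ℕ) (hn : 1 ≤ n) (S σ : ℝ) (hS : 0 < S) (hσ : 0 < σ)
    (h2Sn : σ ≤ 2 * S * n) (γ : ℕ → ℝ)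
    (hγ0 : γ 0 = 1 / (4 * n))
    (hrec : ∀ k, γ (k + 1) =
      (1 / 2) * ((1 / (2 * n) - γ k ^ 2 * σ / S)
        + Real.sqrt ((1 / (2 * n) - γ k ^ 2 * σ / S) ^ 2 + 4 * γ k ^ 2))) :
    Monotone γ ∧ (∀ k, γ k ≤ Real.sqrt (S / (2 * n * σ))) ∧
    ∀ k, S / (2 * n * σ) - γ (k + 1) ^ 2
        = (1 - γ (k + 1) * σ / S) * (S / (2 * n * σ) - γ k ^ 2) := by
  have hN : (1:ℝ) ≤ (n:ℝ) := by exact_mod_cast hn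
  have hN0 : (0:ℝ) < (n:ℝ) := lt_of_lt_of_le one_pos hN
  have hb0 : (0:ℝ) < S / (2 * n * σ) := by positivity
  set b : ℝ := S / (2 * n * σ) with hbdef
  set r : ℝ := Real.sqrt b with hrdef
  have hr0 : (0:ℝ) ≤ r := Real.sqrt_nonneg b
  have hr2 : r ^ 2 = b := Real.sq_sqrt hb0.le
  -- r * σ ≤ S
  have hrS : r * σ ≤ S := by
    have hb_le : b ≤ (S / σ) ^ 2 := by
      rw [hbdef, div_pow, div_le_div_iff₀ (by positivity) (by positivity)]
      nlinarith [mul_pos hS hσ]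
    have h' : r ≤ S / σ := by
      rw [hrdef]
      calc Real.sqrt b ≤ Real.sqrt ((S / σ) ^ 2) := Real.sqrt_le_sqrt hb_le
        _ = S / σ := Real.sqrt_sq (by positivity)
    exact (le_div_iff₀ hσ).mp h'
  -- 1/(4n) ≤ r
  have hrn : 1 / (4 * (n:ℝ)) ≤ r := by
    have h1 : (1 / (4 * (n:ℝ))) ^ 2 ≤ b := by
      rw [hbdef, div_pow, one_pow, div_le_div_iff₀ (by positivity) (by positivity)]
      nlinarith [mul_pos hN0 hN0, mul_pos hS hN0]
    rw [hrdef]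
    calc 1 / (4 * (n:ℝ)) = Real.sqrt ((1 / (4 * (n:ℝ))) ^ 2) :=
          (Real.sqrt_sq (by positivity)).symm
      _ ≤ Real.sqrt b := Real.sqrt_le_sqrt h1
  -- key algebraic fact: b * σ * (2n) = S
  have hbσ : b * σ * (2 * n) = S := by rw [hbdef]; field_simp
  clear_value b r
  -- quadratic equation for γ (k+1)
  have hquad : ∀ k, γ (k+1) ^ 2
      = (1 / (2 * n) - γ k ^ 2 * σ / S) * γ (k+1) + γ k ^ 2 := by
    intro k
    have hD : (0:ℝ) ≤ (1 / (2 * n) - γ k ^ 2 * σ / S) ^ 2 + 4 * γ k ^ 2 := by positivity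
    have hs := Real.sq_sqrt hD
    rw [hrec k]
    linear_combination hs / 4
  -- the one-step lemma
  have hstep : ∀ k, 0 ≤ γ k → γ k ≤ r → γ k ≤ γ (k+1) ∧ γ (k+1) ≤ r := by
    intro k h0 hle
    set A : ℝ := 1 / (2 * n) - γ k ^ 2 * σ / S with hAdef
    clear_value A
    have hc : γ k ^ 2 ≤ b := by nlinarith [hr2]
    have hA : 0 ≤ A := by
      rw [hAdef, sub_nonneg, div_le_div_iff₀ hS (by positivity : (0:ℝ) < 2 * n)]
      nlinarith [hbσ, mul_nonneg (sub_nonneg.mpr hc) (by positivity : (0:ℝ) ≤ σ * (2 * n))]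
    have hAle : A ≤ 1 / (2 * n) := by
      rw [hAdef]
      have : 0 ≤ γ k ^ 2 * σ / S := by positivity
      linarith
    have h14 : 1 ≤ r * (4 * n) := (div_le_iff₀ (by positivity : (0:ℝ) < 4 * n)).mp hrn
    have h24 : 1 / (2 * (n:ℝ)) ≤ 2 * r := by
      rw [div_le_iff₀ (by positivity : (0:ℝ) < 2 * n)]
      nlinarith
    have h2rA : 0 ≤ 2 * r - A := by linarith
    constructor
    · -- monotonicity
      have hsq : (2 * γ k) ^ 2 ≤ A ^ 2 + 4 * γ k ^ 2 := by nlinarith [sq_nonneg A]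
      have hge := Real.sqrt_le_sqrt hsq
      rw [Real.sqrt_sq (by linarith : (0:ℝ) ≤ 2 * γ k)] at hge
      rw [hrec k, ← hAdef]
      linarith
    · -- upper bound
      have h1 : 0 ≤ (b - γ k ^ 2) * (S - r * σ) * (2 * n) := by
        apply mul_nonneg (mul_nonneg (by linarith) (by linarith)) (by positivity)
      have hAS : A * S * (2 * n) = S - γ k ^ 2 * σ * (2 * n) := by
        rw [hAdef]; field_simp
      have hArS : r * (A * S * (2 * n)) = r * S - r * (γ k ^ 2 * σ * (2 * n)) := by
        linear_combination r * hAS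
      have hbrσ : r * (b * σ * (2 * n)) = r * S := by linear_combination r * hbσ
      have h2 : 0 ≤ S * (b - γ k ^ 2 - r * A) * (2 * n) := by linarith [h1, hArS, hbrσ]
      have h3 : (S * (2 * n)) * 0 ≤ (S * (2 * n)) * (b - γ k ^ 2 - r * A) := by
        linarith [h2]
      have key2 : γ k ^ 2 + r * A ≤ b := by
        have := le_of_mul_le_mul_left h3 (by positivity : (0:ℝ) < S * (2 * n))
        linarith
      have hfb : A ^ 2 + 4 * γ k ^ 2 ≤ (2 * r - A) ^ 2 := by nlinarith [key2, hr2]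
      have hsle := Real.sqrt_le_sqrt hfb
      rw [Real.sqrt_sq h2rA] at hsle
      rw [hrec k, ← hAdef]
      linarith
  -- invariant
  have H : ∀ k, 0 ≤ γ k ∧ γ k ≤ r := by
    intro k
    induction k with
    | zero =>
        constructor
        · rw [hγ0]; positivity
        · rw [hγ0]; exact hrn
    | succ m ih =>
        obtain ⟨h0, hle⟩ := ih
        obtain ⟨h1, h2⟩ := hstep m h0 hle
        exact ⟨le_trans h0 h1, h2⟩
  refine ⟨monotone_nat_of_le_succ (fun k => (hstep k (H k).1 (H k).2).1),
    fun k => (H k).2, fun k => ?_⟩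
  have hq := hquad k
  have hb2 : σ * b / S = 1 / (2 * (n:ℝ)) := by
    rw [hbdef]; field_simp
  linear_combination (-1) * hq + γ (k+1) * hb2
end

section
/- Let S, σ, n > 0 with 2Sn ≥ σ, and define f(γ) = (1/2)[(1/(2n) − γ²σ/S) + √((1/(2n) − γ²σ/S)² + 4γ²)] for γ ∈ [0, √(S/(2nσ))]. Then 0 ≤ f'(γ) ≤ 1 − γσ/S < 1 on this interval; in particular f is a contraction mapping on [0, √(S/(2nσ))] restricted to [γ₋₁, √(S/(2nσ))] for any γ₋₁ > 0. -/
/-!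
Write `u = A - γ²B` and `s = √(u² + 4γ²)` with `A = 1/(2n)`, `B = σ/S`, so that
`F'(γ) = γ(2 - uB)/s - γB`. Both bounds reduce to comparing squares:
`(2 - uB)² - B²s² = 4(1 - AB) ≥ 0` gives `F' ≥ 0`, and
`s² - γ²(2 - uB)² = u²(1 - γ²B²) + 4γ²uB ≥ 0` gives `F' ≤ 1 - γB`.
The constraint `γ ≤ √(S/(2nσ))` is `γ²B ≤ A`, i.e. `u ≥ 0`, and `2Sn ≥ σ` is `AB ≤ 1`.
-/

open Real

noncomputable def acdmUpdate (A B γ : ℝ) : ℝ :=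
  (1 / 2) * ((A - γ ^ 2 * B) + √((A - γ ^ 2 * B) ^ 2 + 4 * γ ^ 2))

section

variable {A B γ : ℝ}

lemma sq_sub_mul_add_four_mul_sq_pos (hA : A ≠ 0) (B γ : ℝ) : 0 < (A - γ ^ 2 * B) ^ 2 + 4 * γ ^ 2 := by
  rcases eq_or_ne γ 0 with rfl | hγ
  · simpa using sq_pos_of_ne_zero hA
  · positivity

lemma hasDerivAt_acdmUpdate (hA : A ≠ 0) (B γ : ℝ) :
    HasDerivAt (acdmUpdate A B)
      (γ * (2 - (A - γ ^ 2 * B) * B) / √((A - γ ^ 2 * B) ^ 2 + 4 * γ ^ 2) - γ * B) γ := by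
  have hu : HasDerivAt (fun γ : ℝ => A - γ ^ 2 * B) (-(2 * γ * B)) γ := by
    simpa using ((hasDerivAt_pow 2 γ).mul_const B).const_sub A
  have hD : HasDerivAt (fun γ : ℝ => (A - γ ^ 2 * B) ^ 2 + 4 * γ ^ 2)
      (2 * (A - γ ^ 2 * B) * (-(2 * γ * B)) + 4 * (2 * γ)) γ := by
    refine ((hu.fun_pow 2).add ((hasDerivAt_pow 2 γ).const_mul 4)).congr_deriv ?_
    norm_num
  have hs := (sq_sub_mul_add_four_mul_sq_pos hA B γ).ne'
  have hs0 := (sqrt_pos.mpr (sq_sub_mul_add_four_mul_sq_pos hA B γ)).ne'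
  refine ((hu.add (hD.sqrt hs)).const_mul (1 / 2 : ℝ)).congr_deriv ?_
  field_simp
  ring

lemma mul_sqrt_le_two_sub {u : ℝ} (hB : 0 ≤ B) (h : u * B + B ^ 2 * γ ^ 2 ≤ 1) :
    B * √(u ^ 2 + 4 * γ ^ 2) ≤ 2 - u * B := by
  rw [← sqrt_sq hB, ← sqrt_mul (sq_nonneg B), sqrt_le_iff, sqrt_sq hB]
  constructor
  · nlinarith [sq_nonneg (B * γ)]
  · nlinarith

lemma mul_two_sub_le_sqrt {u : ℝ} (hu : 0 ≤ u) (hB : 0 ≤ B) (hγB : γ ^ 2 * B ^ 2 ≤ 1) :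
    γ * (2 - u * B) ≤ √(u ^ 2 + 4 * γ ^ 2) := by
  refine (le_abs_self _).trans (abs_le_sqrt ?_)
  have huB : 0 ≤ u * B := mul_nonneg hu hB
  nlinarith [mul_nonneg (sq_nonneg u) (sub_nonneg.mpr hγB), mul_nonneg (sq_nonneg γ) huB]

lemma deriv_acdmUpdate_mem (hA : 0 < A) (hB : 0 ≤ B) (hAB : A * B ≤ 1) (hγ : 0 ≤ γ)
    (hγA : γ ^ 2 * B ≤ A) :
    0 ≤ deriv (acdmUpdate A B) γ ∧ deriv (acdmUpdate A B) γ ≤ 1 - γ * B := by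
  rw [(hasDerivAt_acdmUpdate hA.ne' B γ).deriv]
  set u := A - γ ^ 2 * B with hu_def
  have hs := sqrt_pos.mpr (sq_sub_mul_add_four_mul_sq_pos hA.ne' B γ)
  have hu : 0 ≤ u := sub_nonneg.mpr hγA
  have hlow : B * √(u ^ 2 + 4 * γ ^ 2) ≤ 2 - u * B :=
    mul_sqrt_le_two_sub hB (by rw [hu_def]; linarith)
  have hup : γ * (2 - u * B) ≤ √(u ^ 2 + 4 * γ ^ 2) :=
    mul_two_sub_le_sqrt hu hB (by nlinarith)
  constructor
  · rw [sub_nonneg, le_div_iff₀ hs]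
    nlinarith [mul_le_mul_of_nonneg_left hlow hγ]
  · linarith [(div_le_one hs).mpr hup]

end

/-- The ACDM coefficient update map
`F(γ) = (1/2)[(1/(2n) - γ²σ/S) + √((1/(2n) - γ²σ/S)² + 4γ²)]`
satisfies `0 ≤ F'(γ) ≤ 1 - γσ/S` on `[0, √(S/(2nσ))]`, and `F'(γ) < 1` for `γ > 0`;
in particular `F` is a contraction on `[γ₋₁, √(S/(2nσ))]` for any `γ₋₁ > 0`. -/
theorem stmt_16 (n : ℕ) (hn : 0 < n) (S σ : ℝ) (hS : 0 < S) (hσ : 0 < σ)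
    (h2Sn : σ ≤ 2 * S * n) (F : ℝ → ℝ)
    (hF : ∀ γ : ℝ, F γ =
      (1 / 2) * ((1 / (2 * n) - γ ^ 2 * σ / S)
        + Real.sqrt ((1 / (2 * n) - γ ^ 2 * σ / S) ^ 2 + 4 * γ ^ 2))) :
    (∀ γ : ℝ, 0 ≤ γ → γ ≤ Real.sqrt (S / (2 * n * σ)) →
      0 ≤ deriv F γ ∧ deriv F γ ≤ 1 - γ * σ / S) ∧
    (∀ γ : ℝ, 0 < γ → γ ≤ Real.sqrt (S / (2 * n * σ)) → deriv F γ < 1) := by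
  have hn' : (0 : ℝ) < n := by exact_mod_cast hn
  have hF' : F = acdmUpdate (1 / (2 * n)) (σ / S) := by
    funext γ
    simp only [hF, acdmUpdate, mul_div_assoc]
  have hAB : 1 / (2 * n) * (σ / S) ≤ 1 := by
    rw [div_mul_div_comm, div_le_one (by positivity)]
    linarith
  have hmain : ∀ γ : ℝ, 0 ≤ γ → γ ≤ √(S / (2 * n * σ)) →
      0 ≤ deriv F γ ∧ deriv F γ ≤ 1 - γ * σ / S := by
    intro γ hγ hγle
    have hγsq : γ ^ 2 ≤ S / (2 * n * σ) := (le_sqrt hγ (by positivity)).mp hγle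
    have hγA : γ ^ 2 * (σ / S) ≤ 1 / (2 * n) := by
      rw [le_div_iff₀ (by positivity)] at hγsq
      rw [mul_div_assoc', div_le_div_iff₀ hS (by positivity)]
      linarith
    rw [hF', mul_div_assoc]
    exact deriv_acdmUpdate_mem (by positivity) (by positivity) hAB hγ hγA
  refine ⟨hmain, fun γ hγ hγle => ?_⟩
  have : 0 < γ * σ / S := by positivity
  linarith [(hmain γ hγ.le hγle).2]
end

section
/- Let A ∈ ℝ^{m×n} have full row rank, let x* satisfy Ax* = b, and let f(y) = (1/2)‖Aᵀy‖² − ⟨b, y⟩ for y ∈ ℝ^m. Then for any y, the minimizer of f over ℝ^m (among those y with Aᵀy of minimal norm) satisfies Aᵀy = x*, and the componentwise Lipschitz constant of ∇f in coordinate i equals ‖a_i‖², where a_i is the i-th row of A. Moreover a single coordinate-descent step y' = y − (1/‖a_i‖²)(AAᵀy − b)_i e_i corresponds, under x = Aᵀy, to the Kaczmarz projection x' = x + ((b_i − ⟨a_i, x⟩)/‖a_i‖²) a_i. -/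
/-!
Under `x = Aᵀy`, `f` is the dual of the least-norm problem `min ½‖x‖²` subject to `Ax = b`, and its
gradient is `AAᵀy - b`. A minimizer is a critical point, so `Aᵀy` solves `Ax = b`; lying in the row
space of `A` it is orthogonal to `ker A`, so by Pythagoras no solution is shorter and it equals `x*`.
Along `eᵢ` the gradient changes at rate `(AAᵀ)ᵢᵢ = ‖aᵢ‖²`, and since `Aᵀeᵢ = aᵢ` the coordinate step
in `y` is the Kaczmarz step in `x`.
-/

open Matrix

namespace Matrix

theorem transpose_mulVec_single_one {ι κ : Type*} [Fintype ι] [DecidableEq ι]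
    (A : Matrix ι κ ℝ) (i : ι) : Aᵀ *ᵥ Pi.single i 1 = A i := by
  rw [mulVec_transpose, single_vecMul, one_smul]
  rfl

variable {ι κ : Type*} [Fintype ι] [Fintype κ] (A : Matrix ι κ ℝ) (b : ι → ℝ)

noncomputable def leastNormDual (y : ι → ℝ) : ℝ :=
  1 / 2 * (Aᵀ *ᵥ y ⬝ᵥ Aᵀ *ᵥ y) - b ⬝ᵥ y

theorem fderiv_leastNormDual_apply (y v : ι → ℝ) :
    fderiv ℝ (leastNormDual A b) y v = (A *ᵥ (Aᵀ *ᵥ y) - b) ⬝ᵥ v := by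
  let B := (dotProductBilin ℝ ℝ (m := κ) (A := ℝ)).toContinuousBilinearMap
  let L := (mulVecLin Aᵀ).toContinuousLinearMap
  have hD := ((B.hasFDerivAt_of_bilinear L.hasFDerivAt L.hasFDerivAt).const_mul (1 / 2)).sub
    ((dotProductBilin ℝ ℝ (m := ι) (A := ℝ)).toContinuousBilinearMap b).hasFDerivAt (x := y)
  rw [HasFDerivAt.fderiv (f := leastNormDual A b) hD]
  simp only [LinearMap.coe_toContinuousLinearMap', ContinuousLinearMap.precompR_apply,
    ContinuousLinearMap.precompL_apply, ContinuousLinearMap.compL_apply,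
    ContinuousLinearMap.comp_apply, _root_.sub_apply, _root_.add_apply, _root_.smul_apply,
    LinearMap.toContinuousBilinearMap_apply, dotProductBilin_apply_apply, mulVecLin_apply,
    smul_eq_mul, sub_dotProduct, B, L]
  rw [dotProduct_comm (Aᵀ *ᵥ v), dotProduct_transpose_mulVec, dotProduct_comm v]
  ring

theorem mulVec_transpose_mulVec_eq_of_forall_le {y : ι → ℝ}
    (hy : ∀ y', leastNormDual A b y ≤ leastNormDual A b y') : A *ᵥ (Aᵀ *ᵥ y) = b := by
  have hcrit := IsLocalMin.fderiv_eq_zero (Filter.Eventually.of_forall hy)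
  refine sub_eq_zero.mp (dotProduct_eq_zero _ fun v => ?_)
  rw [← fderiv_leastNormDual_apply, hcrit, _root_.zero_apply]

theorem transpose_mulVec_eq_of_isLeastNorm {xstar : κ → ℝ} (hsol : A *ᵥ xstar = b)
    (hminnorm : ∀ z, A *ᵥ z = b → xstar ⬝ᵥ xstar ≤ z ⬝ᵥ z) {y : ι → ℝ}
    (hy : A *ᵥ (Aᵀ *ᵥ y) = b) : Aᵀ *ᵥ y = xstar := by
  set x := Aᵀ *ᵥ y
  set u := xstar - x
  have hker : A *ᵥ u = 0 := by rw [mulVec_sub, hsol, hy, sub_self]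
  have horth : x ⬝ᵥ u = 0 := by
    rw [dotProduct_comm, dotProduct_transpose_mulVec, hker, dotProduct_zero]
  have hu : u ⬝ᵥ u ≤ 0 := by
    have hle := hminnorm x hy
    rw [(add_sub_cancel x xstar).symm, add_dotProduct, dotProduct_add, dotProduct_add,
      dotProduct_comm u x, horth] at hle
    linarith
  have hu0 : u = 0 :=
    dotProduct_self_eq_zero.mp (hu.antisymm (by simpa using dotProduct_star_self_nonneg u))
  exact (sub_eq_zero.mp hu0).symm

theorem fderiv_leastNormDual_add_sub (y w v : ι → ℝ) :
    fderiv ℝ (leastNormDual A b) (y + w) v - fderiv ℝ (leastNormDual A b) y v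
      = Aᵀ *ᵥ w ⬝ᵥ Aᵀ *ᵥ v := by
  rw [fderiv_leastNormDual_apply, fderiv_leastNormDual_apply, ← sub_dotProduct,
    mulVec_add, mulVec_add, add_sub_right_comm, add_sub_cancel_left, dotProduct_comm,
    dotProduct_transpose_mulVec]

variable [DecidableEq ι]

theorem abs_fderiv_leastNormDual_add_smul_single_sub (y : ι → ℝ) (i : ι) (t : ℝ) :
    |fderiv ℝ (leastNormDual A b) (y + t • Pi.single i 1) (Pi.single i 1)
        - fderiv ℝ (leastNormDual A b) y (Pi.single i 1)| = (∑ j, A i j ^ 2) * |t| := by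
  have hrow : A i ⬝ᵥ A i = ∑ j, A i j ^ 2 := by simp only [dotProduct, sq]
  rw [fderiv_leastNormDual_add_sub, mulVec_smul, transpose_mulVec_single_one, smul_dotProduct,
    smul_eq_mul, hrow, abs_mul, abs_of_nonneg (a := ∑ j, A i j ^ 2) (by positivity), mul_comm]

theorem transpose_mulVec_sub_smul_single (y : ι → ℝ) (i : ι) (s : ℝ) :
    Aᵀ *ᵥ (y - ((A *ᵥ (Aᵀ *ᵥ y) - b) i / s) • Pi.single i 1)
      = Aᵀ *ᵥ y + ((b i - A i ⬝ᵥ Aᵀ *ᵥ y) / s) • A i := by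
  rw [mulVec_sub, mulVec_smul, transpose_mulVec_single_one, sub_eq_add_neg, ← neg_smul, ← neg_div,
    Pi.sub_apply, neg_sub]
  rfl

end Matrix

theorem stmt_18_general {m n : ℕ} (A : Matrix (Fin m) (Fin n) ℝ) (b : Fin m → ℝ)
    (xstar : Fin n → ℝ)
    (hsol : A.mulVec xstar = b)
    (hminnorm : ∀ z : Fin n → ℝ, A.mulVec z = b → xstar ⬝ᵥ xstar ≤ z ⬝ᵥ z)
    (f : (Fin m → ℝ) → ℝ)
    (hf : ∀ y, f y = (1 / 2) * (A.transpose.mulVec y ⬝ᵥ A.transpose.mulVec y) - b ⬝ᵥ y) :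
    (∀ y : Fin m → ℝ, (∀ y', f y ≤ f y') → A.transpose.mulVec y = xstar) ∧
    (∀ i : Fin m, IsLeast {c : ℝ | ∀ (y : Fin m → ℝ) (t : ℝ),
        |fderiv ℝ f (y + t • (Pi.single i 1 : Fin m → ℝ)) ((Pi.single i 1 : Fin m → ℝ))
          - fderiv ℝ f y ((Pi.single i 1 : Fin m → ℝ))| ≤ c * |t|}
      (∑ j, (A i j) ^ 2)) ∧
    (∀ (y : Fin m → ℝ) (i : Fin m),
      A.transpose.mulVec
          (y - ((A.mulVec (A.transpose.mulVec y) - b) i / ∑ j, (A i j) ^ 2) •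
            (Pi.single i 1 : Fin m → ℝ))
        = A.transpose.mulVec y
          + ((b i - (fun j => A i j) ⬝ᵥ A.transpose.mulVec y) / ∑ j, (A i j) ^ 2) •
              fun j => A i j) := by
  obtain rfl : f = leastNormDual A b := funext hf
  refine ⟨fun y hy => ?_, fun i => ⟨fun y t => ?_, fun c hc => ?_⟩,
    fun y i => transpose_mulVec_sub_smul_single A b y i _⟩
  · exact transpose_mulVec_eq_of_isLeastNorm A b hsol hminnorm
      (mulVec_transpose_mulVec_eq_of_forall_le A b hy)
  · exact (abs_fderiv_leastNormDual_add_smul_single_sub A b y i t).le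
  · simpa only [abs_fderiv_leastNormDual_add_smul_single_sub, abs_one, mul_one] using hc 0 1

/-- Randomized Kaczmarz as coordinate descent: for full row rank `A`, `x*` the minimal-norm
solution of `Ax = b`, and `f(y) = (1/2)‖Aᵀy‖² - ⟨b, y⟩`:
(a) any minimizer `y` of `f` has `Aᵀy = x*`;
(b) the componentwise Lipschitz constant of `∇f` in coordinate `i` is exactly `‖a_i‖²`
    (`a_i` the `i`-th row of `A`);
(c) the coordinate descent step on `f` corresponds, under `x = Aᵀy`, to the Kaczmarz
    projection `x' = x + ((b_i - ⟨a_i, x⟩)/‖a_i‖²)a_i`. -/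
theorem stmt_18 {m n : ℕ} (A : Matrix (Fin m) (Fin n) ℝ) (b : Fin m → ℝ)
    (hrank : A.rank = m) (xstar : Fin n → ℝ)
    (hsol : A.mulVec xstar = b)
    (hminnorm : ∀ z : Fin n → ℝ, A.mulVec z = b → xstar ⬝ᵥ xstar ≤ z ⬝ᵥ z)
    (f : (Fin m → ℝ) → ℝ)
    (hf : ∀ y, f y = (1 / 2) * (A.transpose.mulVec y ⬝ᵥ A.transpose.mulVec y) - b ⬝ᵥ y) :
    (∀ y : Fin m → ℝ, (∀ y', f y ≤ f y') → A.transpose.mulVec y = xstar) ∧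
    (∀ i : Fin m, IsLeast {c : ℝ | ∀ (y : Fin m → ℝ) (t : ℝ),
        |fderiv ℝ f (y + t • (Pi.single i 1 : Fin m → ℝ)) ((Pi.single i 1 : Fin m → ℝ))
          - fderiv ℝ f y ((Pi.single i 1 : Fin m → ℝ))| ≤ c * |t|}
      (∑ j, (A i j) ^ 2)) ∧
    (∀ (y : Fin m → ℝ) (i : Fin m),
      A.transpose.mulVec
          (y - ((A.mulVec (A.transpose.mulVec y) - b) i / ∑ j, (A i j) ^ 2) •
            (Pi.single i 1 : Fin m → ℝ))
        = A.transpose.mulVec y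
          + ((b i - (fun j => A i j) ⬝ᵥ A.transpose.mulVec y) / ∑ j, (A i j) ^ 2) •
              fun j => A i j) :=
  stmt_18_general A b xstar hsol hminnorm f hf
end

section
/- Let G = (V, E) be a connected weighted graph with spanning tree T. For each off-tree edge e ∈ E∖T let c_e ∈ ℝ^E be the tree cycle circulation (sending 1 unit on e plus 1 unit along the tree path closing the cycle), and let C ∈ ℝ^{E×(E∖T)} have columns c_e. Let R be the diagonal matrix of edge resistances r_e > 0. Then for the function f(ỹ) = (1/2)‖R^{1/2}(z₀ + C R^{−1/2} ỹ)‖̃² — i.e., f(ỹ) = (1/2)(z₀ + CR^{−1/2}ỹ)ᵀR(z₀ + CR^{−1/2}ỹ) — the Hessian H = R^{−1/2}CᵀRCR^{−1/2} satisfies: (a) H ⪰ I (f is 1-strongly convex), and (b) the diagonal entry H_{ee} = st(e) + 1 for every e ∈ E∖T, where st(e) = (Σ_{e'∈ tree path of e} r_{e'}) / r_e is the tree stretch of e. -/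
open Matrix

/-- The rescaled cycle-space quadratic of the SDD solver: let `T` be the set of tree edges,
`F = {e // e ∉ T}` the off-tree edges, `c e` the tree-cycle circulation of the off-tree
edge `e` (value `1` on `e`, zero on every other off-tree edge, supported on `T ∪ {e}`),
`C` the matrix with columns `c e`, and `R = diag(r)` with resistances `r > 0`. Then
`H = R_F^{-1/2} Cᵀ R C R_F^{-1/2}` satisfies (a) `yᵀHy ≥ ‖y‖²` (1-strong convexity of
`f(ỹ) = (1/2)(z₀ + CR^{-1/2}ỹ)ᵀR(z₀ + CR^{-1/2}ỹ)`), and (b) `H_{ee} = st(e) + 1`, where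
`st(e) = (Σ_{e'∈T} r_{e'} (c e e')²)/r_e` is the tree stretch of `e`. -/
theorem stmt_19 {E : Type*} [Fintype E] [DecidableEq E] (T : Finset E)
    (r : E → ℝ) (hr : ∀ e, 0 < r e)
    (c : {e : E // e ∉ T} → E → ℝ)
    (hc_self : ∀ e : {e : E // e ∉ T}, c e e.1 = 1)
    (hc_off : ∀ e e' : {e : E // e ∉ T}, e ≠ e' → c e e'.1 = 0)
    (hc_supp : ∀ (e : {e : E // e ∉ T}) (a : E), a ∉ T → a ≠ e.1 → c e a = 0)
    (C : Matrix E {e : E // e ∉ T} ℝ) (hC : ∀ a e, C a e = c e a)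
    (R : Matrix E E ℝ) (hR : R = Matrix.diagonal r)
    (H : Matrix {e : E // e ∉ T} {e : E // e ∉ T} ℝ)
    (hH : H = Matrix.diagonal (fun e => (Real.sqrt (r e.1))⁻¹) * (Cᵀ * R * C) *
        Matrix.diagonal (fun e => (Real.sqrt (r e.1))⁻¹)) :
    (∀ y : {e : E // e ∉ T} → ℝ, y ⬝ᵥ y ≤ y ⬝ᵥ H.mulVec y) ∧
    (∀ e : {e : E // e ∉ T},
      H e e = (∑ e' ∈ T, r e' * (c e e') ^ 2) / r e.1 + 1) := by
  subst hR hH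
  have hrs : ∀ a, (Real.sqrt (r a)) ≠ 0 := fun a => ne_of_gt (Real.sqrt_pos.2 (hr a))
  have hsq : ∀ a, Real.sqrt (r a) * Real.sqrt (r a) = r a :=
    fun a => Real.mul_self_sqrt (hr a).le
  have hisq : ∀ a, ((Real.sqrt (r a))⁻¹) ^ 2 = (r a)⁻¹ := by
    intro a
    rw [← Real.sqrt_inv, Real.sq_sqrt (inv_nonneg.mpr (hr a).le)]
  set D : Matrix {e : E // e ∉ T} {e : E // e ∉ T} ℝ :=
    Matrix.diagonal (fun e => (Real.sqrt (r e.1))⁻¹) with hD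
  constructor
  · intro y
    set z : {e : E // e ∉ T} → ℝ := D *ᵥ y with hz
    set u : E → ℝ := C *ᵥ z with huu
    have expand : y ⬝ᵥ (D * (Cᵀ * Matrix.diagonal r * C) * D) *ᵥ y
        = ∑ a : E, r a * u a ^ 2 := by
      have h1 : (D * (Cᵀ * Matrix.diagonal r * C) * D) *ᵥ y
          = D *ᵥ (Cᵀ *ᵥ (Matrix.diagonal r *ᵥ (C *ᵥ z))) := by
        rw [hz, Matrix.mulVec_mulVec, Matrix.mulVec_mulVec, Matrix.mulVec_mulVec,
          Matrix.mulVec_mulVec]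
        simp only [Matrix.mul_assoc]
      rw [h1]
      have h2 : ∀ w, y ⬝ᵥ D *ᵥ w = z ⬝ᵥ w := by
        intro w
        simp [hz, hD, Matrix.mulVec_diagonal, dotProduct]
        exact Finset.sum_congr rfl fun i _ => by ring
      rw [h2]
      have h3 : z ⬝ᵥ Cᵀ *ᵥ (Matrix.diagonal r *ᵥ u) = u ⬝ᵥ Matrix.diagonal r *ᵥ u := by
        conv_lhs => rw [Matrix.dotProduct_mulVec, Matrix.vecMul_transpose]
      rw [h3]
      simp only [dotProduct, Matrix.mulVec_diagonal]
      exact Finset.sum_congr rfl fun a _ => by ring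
    rw [expand]
    have hsub : y ⬝ᵥ y = ∑ a ∈ Tᶜ, (fun a => r a * u a ^ 2) a := by
      rw [Finset.sum_subtype Tᶜ (fun a => Finset.mem_compl) (fun a => r a * u a ^ 2)]
      simp only [dotProduct]
      refine Finset.sum_congr rfl fun e _ => ?_
      have hue : u e.1 = z e := by
        rw [huu]
        show ∑ e', C e.1 e' * z e' = z e
        rw [Finset.sum_eq_single e (fun e' _ hne => by rw [hC, hc_off e' e hne, zero_mul])
          (fun h => absurd (Finset.mem_univ e) h), hC, hc_self, one_mul]
      rw [hue, hz]
      show y e * y e = r e.1 * ((Matrix.diagonal fun e => (Real.sqrt (r e.1))⁻¹) *ᵥ y) e ^ 2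
      rw [Matrix.mulVec_diagonal, mul_pow, hisq e.1]
      field_simp [(hr e.1).ne']
    rw [hsub]
    refine Finset.sum_le_sum_of_subset_of_nonneg (Finset.subset_univ _) fun a _ _ => ?_
    have := (hr a).le
    positivity
  · intro e
    have hA : (Cᵀ * Matrix.diagonal r * C) e e = ∑ a : E, c e a * (r a * c e a) := by
      simp only [Matrix.mul_apply, Matrix.transpose_apply, hC, Matrix.diagonal_apply,
        mul_ite, mul_zero, ite_mul, zero_mul, Finset.sum_ite_eq, Finset.sum_ite_eq',
        Finset.mem_univ, if_true]
      exact Finset.sum_congr rfl fun a _ => by ring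
    have hentry : (D * (Cᵀ * Matrix.diagonal r * C) * D) e e
        = (Real.sqrt (r e.1))⁻¹ * (∑ a : E, c e a * (r a * c e a)) * (Real.sqrt (r e.1))⁻¹ := by
      rw [Matrix.mul_diagonal, Matrix.diagonal_mul, hA]
    rw [hentry]
    have hsplit : ∑ a : E, c e a * (r a * c e a)
        = (∑ e' ∈ T, r e' * (c e e') ^ 2) + r e.1 := by
      rw [← Finset.sum_add_sum_compl T]
      congr 1
      · exact Finset.sum_congr rfl fun a _ => by ring
      · rw [Finset.sum_eq_single_of_mem e.1 (Finset.mem_compl.mpr e.2)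
          (fun a ha hne => by rw [hc_supp e a (Finset.mem_compl.mp ha) hne]; ring)]
        rw [hc_self]; ring
    rw [hsplit]
    set S := ∑ e' ∈ T, r e' * (c e e') ^ 2 with hS
    calc (Real.sqrt (r e.1))⁻¹ * (S + r e.1) * (Real.sqrt (r e.1))⁻¹
        = (S + r e.1) * (Real.sqrt (r e.1) * Real.sqrt (r e.1))⁻¹ := by
          rw [mul_inv]; ring
      _ = (S + r e.1) / r e.1 := by rw [hsq, div_eq_mul_inv]
      _ = S / r e.1 + 1 := by rw [add_div, div_self (hr e.1).ne']
end
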